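/- The Moore–Penrose pseudo-inverse of the weighted Laplacian L_W = W^{-1/2} L W^{-1/2} is L_W^+ = W^{1/2}(I - e \pi^T) L^+ (I - \pi e^T) W^{1/2}, where \pi = w/|w|. -/

import Mathlib

open Matrix

/-!
With `D = W^{1/2}` and `K = I - e πᵀ`, the candidate is `D K L⁺ Kᵀ D` and `L_W = D⁻¹ L D⁻¹`.
Two identities make the Penrose equations collapse: `L K = L` because `L e = 0`, and
`L L⁺ Kᵀ = Kᵀ` because `K e = 0` while `ker L = span e` (maximum principle plus connectivity),
so the rows of `K` lie in the range of the symmetric matrix `L`. Both products `L_W L_W⁺` and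
`L_W⁺ L_W` then reduce to `D⁻¹ Kᵀ D = I - √w √wᵀ / |w|`, which is symmetric.
-/

/-- `P` is the Moore–Penrose pseudo-inverse of `M`. -/
def IsMoorePenroseInverse {n : ℕ} (M P : Matrix (Fin n) (Fin n) ℝ) : Prop :=
  M * P * M = M ∧ P * M * P = P ∧ (M * P)ᵀ = M * P ∧ (P * M)ᵀ = P * M

namespace IsMoorePenroseInverse

variable {n : ℕ} {M P : Matrix (Fin n) (Fin n) ℝ}

theorem transpose (h : IsMoorePenroseInverse M P) : IsMoorePenroseInverse Mᵀ Pᵀ := by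
  obtain ⟨hMPM, hPMP, hMP, hPM⟩ := h
  refine ⟨?_, ?_, ?_, ?_⟩
  · rw [← transpose_mul, ← transpose_mul, ← Matrix.mul_assoc, hMPM]
  · rw [← transpose_mul, ← transpose_mul, ← Matrix.mul_assoc, hPMP]
  · rw [← transpose_mul, hPM, hPM]
  · rw [← transpose_mul, hMP, hMP]

theorem unique {Q : Matrix (Fin n) (Fin n) ℝ} (hP : IsMoorePenroseInverse M P)
    (hQ : IsMoorePenroseInverse M Q) : P = Q := by
  obtain ⟨hMPM, hPMP, hMP, hPM⟩ := hP
  obtain ⟨hMQM, hQMQ, hMQ, hQM⟩ := hQ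
  have hMP_eq : M * P = M * Q := calc
    M * P = (M * Q * M * P)ᵀ := by rw [hMQM, hMP]
    _ = (M * P)ᵀ * (M * Q)ᵀ := by rw [← transpose_mul, Matrix.mul_assoc (M * Q)]
    _ = M * Q := by rw [hMP, hMQ, ← Matrix.mul_assoc, hMPM]
  have hPM_eq : P * M = Q * M := calc
    P * M = (P * (M * Q * M))ᵀ := by rw [hMQM, hPM]
    _ = (Q * M)ᵀ * (P * M)ᵀ := by simp only [← transpose_mul, Matrix.mul_assoc]
    _ = Q * M := by rw [hQM, hPM, Matrix.mul_assoc, ← Matrix.mul_assoc M, hMPM]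
  calc P = P * M * P := hPMP.symm
    _ = Q * M * Q := by rw [Matrix.mul_assoc, hMP_eq, ← Matrix.mul_assoc, hPM_eq]
    _ = Q := hQMQ

theorem isSymm (h : IsMoorePenroseInverse M P) (hM : M.IsSymm) : P.IsSymm :=
  h.unique (hM.eq ▸ h.transpose) |>.symm

theorem mul_comm_of_isSymm (h : IsMoorePenroseInverse M P) (hM : M.IsSymm) :
    P * M = M * P := by
  rw [← h.2.2.2, transpose_mul, hM.eq, (h.isSymm hM).eq]

/-- Rows of `K` orthogonal to `ker M` lie in the range of `M`, on which `M * P` is the identity. -/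
theorem mul_mul_transpose_eq_transpose (h : IsMoorePenroseInverse M P) (hM : M.IsSymm)
    {K : Matrix (Fin n) (Fin n) ℝ} (hker : ∀ v, M *ᵥ v = 0 → K *ᵥ v = 0) :
    M * P * Kᵀ = Kᵀ := by
  set R := Kᵀ - M * P * Kᵀ
  have hMMP : M * M * P = M := by
    rw [Matrix.mul_assoc, ← h.mul_comm_of_isSymm hM, ← Matrix.mul_assoc, h.1]
  have hMR : M * R = 0 := by
    rw [Matrix.mul_sub, ← Matrix.mul_assoc, ← Matrix.mul_assoc, hMMP, sub_self]
  have hKR : K * R = 0 := by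
    refine ext_iff_mulVec.mpr fun v => ?_
    rw [← mulVec_mulVec, zero_mulVec]
    exact hker _ (by rw [mulVec_mulVec, hMR, zero_mulVec])
  have hRR : Rᵀ * R = 0 := by
    have hRt : Rᵀ = K - K * P * M := by
      simp only [R, transpose_sub, transpose_mul, transpose_transpose, hM.eq, (h.isSymm hM).eq,
        Matrix.mul_assoc]
    rw [hRt, Matrix.sub_mul, hKR, Matrix.mul_assoc, hMR, Matrix.mul_zero, sub_zero]
  rw [← conjTranspose_eq_transpose_of_trivial, conjTranspose_mul_self_eq_zero, sub_eq_zero] at hRR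
  exact hRR.symm

theorem conj_of_ker_le (h : IsMoorePenroseInverse M P) (hM : M.IsSymm)
    {D D' K : Matrix (Fin n) (Fin n) ℝ} (hDD' : D * D' = 1) (hD'D : D' * D = 1)
    (hD : D.IsSymm) (hD' : D'.IsSymm) (hMK : M * K = M)
    (hker : ∀ v, M *ᵥ v = 0 → K *ᵥ v = 0) (hsymm : (D' * Kᵀ * D).IsSymm) :
    IsMoorePenroseInverse (D' * M * D') (D * K * P * Kᵀ * D) := by
  have hKt : M * P * Kᵀ = Kᵀ := h.mul_mul_transpose_eq_transpose hM hker
  have hKPM : K * P * M = K := by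
    simpa only [transpose_mul, transpose_transpose, hM.eq, (h.isSymm hM).eq, Matrix.mul_assoc]
      using congrArg (·ᵀ) hKt
  have hKtM : Kᵀ * M = M := by
    simpa only [transpose_mul, hM.eq] using congrArg (·ᵀ) hMK
  have hKK : K * K = K := by
    nth_rewrite 1 [← hKPM]
    rw [Matrix.mul_assoc, hMK, hKPM]
  have hswap : D * K * D' = D' * Kᵀ * D := by
    simpa only [transpose_mul, transpose_transpose, hD.eq, hD'.eq, Matrix.mul_assoc]
      using hsymm.eq
  have hleft : D' * M * D' * (D * K * P * Kᵀ * D) = D' * Kᵀ * D := by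
    calc _ = D' * (M * (D' * D) * K * P * Kᵀ) * D := by simp only [Matrix.mul_assoc]
      _ = _ := by rw [hD'D, Matrix.mul_one, hMK, hKt]
  have hright : D * K * P * Kᵀ * D * (D' * M * D') = D' * Kᵀ * D := by
    calc _ = D * (K * P * (Kᵀ * (D * D') * M)) * D' := by simp only [Matrix.mul_assoc]
      _ = _ := by rw [hDD', Matrix.mul_one, hKtM, hKPM, hswap]
  refine ⟨?_, ?_, by rw [hleft, hsymm.eq], by rw [hright, hsymm.eq]⟩
  · calc _ = D' * Kᵀ * D * (D' * M * D') := by rw [hleft]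
      _ = D' * (Kᵀ * (D * D') * M) * D' := by simp only [Matrix.mul_assoc]
      _ = _ := by rw [hDD', Matrix.mul_one, hKtM]
  · calc _ = D' * Kᵀ * D * (D * K * P * Kᵀ * D) := by rw [hright]
      _ = D * K * D' * (D * K * P * Kᵀ * D) := by rw [hswap]
      _ = D * (K * (D' * D) * K) * P * Kᵀ * D := by simp only [Matrix.mul_assoc]
      _ = _ := by rw [hD'D, Matrix.mul_one, hKK]

end IsMoorePenroseInverse

section Laplacian

variable {n : ℕ} (A : Matrix (Fin n) (Fin n) ℝ)

theorem laplacian_mulVec_apply (v : Fin n → ℝ) (i : Fin n) :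
    ((diagonal (A *ᵥ 1) - A) *ᵥ v) i = ∑ j, A i j * (v i - v j) := by
  rw [sub_mulVec, Pi.sub_apply, mulVec_diagonal]
  simp only [mulVec, dotProduct, Pi.one_apply, mul_one, Finset.sum_mul, mul_sub,
    Finset.sum_sub_distrib]

theorem laplacian_mulVec_one : (diagonal (A *ᵥ 1) - A) *ᵥ (fun _ => 1) = 0 := by
  ext i
  simp [laplacian_mulVec_apply]

theorem laplacian_isSymm (hA : A.IsSymm) : (diagonal (A *ᵥ 1) - A).IsSymm := by
  rw [IsSymm, transpose_sub, diagonal_transpose, hA.eq]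

variable {A}

/-- Maximum principle: at a maximum of `v`, `(L v) i = 0` forces `v` to be constant along
every edge out of `i`, and connectivity spreads the maximum everywhere. -/
theorem eq_of_laplacian_mulVec_eq_zero (hnonneg : ∀ i j, 0 ≤ A i j)
    (hconn : ∀ i j : Fin n, Relation.ReflTransGen (fun a b => 0 < A a b) i j)
    {v : Fin n → ℝ} (hv : (diagonal (A *ᵥ 1) - A) *ᵥ v = 0) (i j : Fin n) : v i = v j := by
  obtain ⟨m, -, hm⟩ := Finset.exists_max_image Finset.univ v ⟨i, Finset.mem_univ i⟩
  have hstep : ∀ a b, v a = v m → 0 < A a b → v b = v m := by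
    intro a b ha hab
    have hterm := (Finset.sum_eq_zero_iff_of_nonneg fun j _ =>
      mul_nonneg (hnonneg a j) (sub_nonneg.mpr (ha ▸ hm j (Finset.mem_univ j)))).mp
      ((laplacian_mulVec_apply A v a).symm.trans (congrFun hv a)) b (Finset.mem_univ b)
    rw [mul_eq_zero, sub_eq_zero] at hterm
    exact hterm.resolve_left hab.ne' ▸ ha
  have hmax : ∀ k, v k = v m := fun k => by
    induction hconn m k with
    | refl => rfl
    | tail _ hbc ih => exact hstep _ _ ih hbc
  rw [hmax i, hmax j]

end Laplacian

theorem mul_one_sub_vecMulVec_of_mulVec_eq_zero {n : ℕ} {M : Matrix (Fin n) (Fin n) ℝ}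
    (hM : M *ᵥ (fun _ => 1) = 0) (π : Fin n → ℝ) :
    M * (1 - vecMulVec (fun _ => 1) π) = M := by
  rw [Matrix.mul_sub, Matrix.mul_one, mul_vecMulVec, hM, zero_vecMulVec, sub_zero]

section Weights

variable {n : ℕ} {w : Fin n → ℝ}

theorem one_sub_vecMulVec_mulVec_eq_zero (hw : ∀ i, 0 < w i) {v : Fin n → ℝ}
    (hv : ∀ i j, v i = v j) :
    ((1 : Matrix (Fin n) (Fin n) ℝ) - vecMulVec (fun _ => 1) (fun i => w i / ∑ k, w k)) *ᵥ v =
      0 := by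
  ext i
  have hsum : (∑ k, w k) ≠ 0 := (Finset.sum_pos (fun k _ => hw k) ⟨i, Finset.mem_univ i⟩).ne'
  simp only [sub_mulVec, one_mulVec, vecMulVec_mulVec, Pi.sub_apply, Pi.smul_apply,
    MulOpposite.smul_eq_mul_unop, MulOpposite.unop_op, one_mul, Pi.zero_apply, dotProduct]
  rw [Finset.sum_congr rfl fun j _ => by rw [hv j i], ← Finset.sum_mul, ← Finset.sum_div,
    div_self hsum, one_mul, sub_self]

theorem isSymm_diagonal_inv_sqrt_mul_one_sub_vecMulVec_mul_diagonal_sqrt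
    (hw : ∀ i, 0 ≤ w i) :
    (diagonal (fun i => (√(w i))⁻¹) * (1 - vecMulVec (fun i => w i / ∑ k, w k) (fun _ => 1)) *
      diagonal (fun i => √(w i))).IsSymm := by
  have hsqrt : ∀ i, (√(w i))⁻¹ * (w i / ∑ k, w k) = √(w i) / ∑ k, w k := fun i => by
    nth_rewrite 2 [← Real.mul_self_sqrt (hw i)]
    rw [mul_div_assoc', ← mul_assoc, inv_mul_mul_self]
  ext i j
  simp only [transpose_apply, mul_diagonal, Matrix.mul_sub, Matrix.sub_apply, diagonal_mul,
    vecMulVec_apply, mul_one, hsqrt]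
  rcases eq_or_ne i j with rfl | hij
  · rfl
  · rw [diagonal_apply_ne _ hij, diagonal_apply_ne _ hij.symm]
    ring

theorem diagonal_sqrt_mul_diagonal_inv_sqrt (hw : ∀ i, 0 < w i) :
    diagonal (fun i => √(w i)) * diagonal (fun i => (√(w i))⁻¹) = 1 := by
  rw [diagonal_mul_diagonal, ← diagonal_one]
  exact congrArg diagonal (funext fun i => mul_inv_cancel₀ (Real.sqrt_pos.mpr (hw i)).ne')

end Weights

theorem weighted_laplacian_pseudoinverse_general
    (n : ℕ) (A : Matrix (Fin n) (Fin n) ℝ)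
    (hsymm : A.IsSymm) (hnonneg : ∀ i j, 0 ≤ A i j)
    (hconn : ∀ i j : Fin n, Relation.ReflTransGen (fun a b => 0 < A a b) i j)
    (w : Fin n → ℝ) (hw : ∀ i, 0 < w i)
    (π : Fin n → ℝ) (hπ : π = fun i => w i / ∑ k, w k)
    (L : Matrix (Fin n) (Fin n) ℝ)
    (hL : L = Matrix.diagonal (A.mulVec 1) - A)
    (Lp : Matrix (Fin n) (Fin n) ℝ) (hLp : IsMoorePenroseInverse L Lp)
    (LW : Matrix (Fin n) (Fin n) ℝ)
    (hLW : LW = Matrix.diagonal (fun i => (Real.sqrt (w i))⁻¹) * L *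
      Matrix.diagonal (fun i => (Real.sqrt (w i))⁻¹)) :
    IsMoorePenroseInverse LW
      (Matrix.diagonal (fun i => Real.sqrt (w i)) *
        (1 - Matrix.vecMulVec (fun _ => (1 : ℝ)) π) * Lp *
        (1 - Matrix.vecMulVec π (fun _ => (1 : ℝ))) *
        Matrix.diagonal (fun i => Real.sqrt (w i))) := by
  subst hπ hL hLW
  have hDD' := diagonal_sqrt_mul_diagonal_inv_sqrt hw
  have hKt :
      ((1 : Matrix (Fin n) (Fin n) ℝ) - vecMulVec (fun _ => 1) fun i => w i / ∑ k, w k)ᵀ =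
        1 - vecMulVec (fun i => w i / ∑ k, w k) (fun _ => 1) := by
    rw [transpose_sub, transpose_one, transpose_vecMulVec]
  rw [← hKt]
  refine hLp.conj_of_ker_le (laplacian_isSymm A hsymm) hDD' (mul_eq_one_comm.mp hDD')
    (isSymm_diagonal _) (isSymm_diagonal _)
    (mul_one_sub_vecMulVec_of_mulVec_eq_zero (laplacian_mulVec_one A) _)
    (fun v hv => one_sub_vecMulVec_mulVec_eq_zero hw
      (eq_of_laplacian_mulVec_eq_zero hnonneg hconn hv)) ?_
  rw [hKt]
  exact isSymm_diagonal_inv_sqrt_mul_one_sub_vecMulVec_mul_diagonal_sqrt fun i => (hw i).le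

theorem weighted_laplacian_pseudoinverse
    (n : ℕ) (A : Matrix (Fin n) (Fin n) ℝ)
    (hsymm : A.IsSymm) (hnonneg : ∀ i j, 0 ≤ A i j) (hdiag : ∀ i, A i i = 0)
    (hconn : ∀ i j : Fin n, Relation.ReflTransGen (fun a b => 0 < A a b) i j)
    (w : Fin n → ℝ) (hw : ∀ i, 0 < w i)
    (π : Fin n → ℝ) (hπ : π = fun i => w i / ∑ k, w k)
    (L : Matrix (Fin n) (Fin n) ℝ)
    (hL : L = Matrix.diagonal (A.mulVec 1) - A)
    (Lp : Matrix (Fin n) (Fin n) ℝ) (hLp : IsMoorePenroseInverse L Lp)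
    (LW : Matrix (Fin n) (Fin n) ℝ)
    (hLW : LW = Matrix.diagonal (fun i => (Real.sqrt (w i))⁻¹) * L *
      Matrix.diagonal (fun i => (Real.sqrt (w i))⁻¹)) :
    IsMoorePenroseInverse LW
      (Matrix.diagonal (fun i => Real.sqrt (w i)) *
        (1 - Matrix.vecMulVec (fun _ => (1 : ℝ)) π) * Lp *
        (1 - Matrix.vecMulVec π (fun _ => (1 : ℝ))) *
        Matrix.diagonal (fun i => Real.sqrt (w i))) :=
  weighted_laplacian_pseudoinverse_general n A hsymm hnonneg hconn w hw π hπ L hL Lp hLp LW hLW
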